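/- arXiv:0706.2135 — 3 statements merged into one kernel-verified Lean document; each statement's English description precedes it below -/
import Mathlib

section
/- (Lemma 3.2, local behavior of Υ at u = 1/2.) Let p ≥ 2 be an integer, β, γ > 0 with γ < β², and λ ∈ (0, 1 − γ/β²). Then Υ_{p,β,γ}(1/2) = 0 and Υ'_{p,β,γ}(1/2) = 0, and the second derivative satisfies Υ''_{p,β,γ}(1/2) = 4(2γ²/β² − 1) if p = 2, and Υ''_{p,β,γ}(1/2) = −4 if p ≥ 3. (Near u = 1/2 the first branch of the definition of Υ_{p,β,γ} applies, so Υ is twice differentiable there.) -/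
open Real

/-- `I(u) = u log u + (1-u) log(1-u) + log 2` (entropy functional; note `Real.log 0 = 0`). -/
noncomputable def Ifun (u : ℝ) : ℝ :=
  u * Real.log u + (1 - u) * Real.log (1 - u) + Real.log 2

/-- The function `Υ_{p,β,γ}` (with cut-off parameter `lam`). -/
noncomputable def Ups (p : ℕ) (β γ lam : ℝ) (u : ℝ) : ℝ :=
  if γ / β ^ 2 + lam - 1 ≤ (1 - 2 * u) ^ p then
    γ ^ 2 / β ^ 2 - Ifun u - γ ^ 2 / (β ^ 2 * (1 + (1 - 2 * u) ^ p))
  else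
    γ ^ 2 / β ^ 2 - Ifun u + β ^ 2 * (1 + (1 - 2 * u) ^ p) - 2 * γ

/-!
Near `u = 1/2` the quantity `(1 - 2u)^p` is close to `0`, which lies above the cut-off
`γ/β² + λ - 1 < 0`, so `Υ` coincides with its first branch `c - I(u) - c/(1 + (1 - 2u)^p)`,
`c = γ²/β²`. There `I''(1/2) = 4`, while the second derivative of `c/(1 + (1 - 2u)^p)` at `1/2`
is `-8c` for `p = 2` and `0` for `p ≥ 3`, as `(1 - 2u)^p` then vanishes to third order.
-/

open Filter Topology Set

lemma one_add_pow_pos {t : ℝ} (ht : -1 < t) (p : ℕ) : 0 < 1 + t ^ p := by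
  rcases le_or_gt 0 t with ht₀ | ht₀
  · positivity
  rcases eq_or_ne p 0 with rfl | hp
  · norm_num
  have hpow : |t| ^ p ≤ |t| :=
    pow_le_of_le_one (abs_nonneg t) (by rw [abs_of_neg ht₀]; linarith) hp
  have := neg_abs_le (t ^ p)
  rw [abs_pow] at this
  linarith [abs_of_neg ht₀]

lemma iteratedDeriv_two_eq_of_hasDerivAt {𝕜 F : Type*} [NontriviallyNormedField 𝕜]
    [NormedAddCommGroup F] [NormedSpace 𝕜 F] {f f' : 𝕜 → F} {x : 𝕜} {a : F}
    (hf : ∀ᶠ y in 𝓝 x, HasDerivAt f (f' y) y) (hf' : HasDerivAt f' a x) :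
    iteratedDeriv 2 f x = a := by
  have hderiv : deriv f =ᶠ[𝓝 x] f' := hf.mono fun y hy ↦ hy.deriv
  rw [iteratedDeriv_succ, iteratedDeriv_one, hderiv.deriv_eq, hf'.deriv]

lemma hasDerivAt_Ifun {u : ℝ} (hu : u ∈ Ioo (0 : ℝ) 1) :
    HasDerivAt Ifun (log u - log (1 - u)) u := by
  have hsub : HasDerivAt (fun x : ℝ ↦ 1 - x) (-1) u := by
    simpa using (hasDerivAt_id u).const_sub 1
  have h := ((hasDerivAt_mul_log hu.1.ne').add
    ((hasDerivAt_mul_log (sub_pos.2 hu.2).ne').comp u hsub)).add_const (log 2)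
  refine h.congr_deriv ?_
  ring

lemma contDiffAt_Ifun {u : ℝ} (hu : u ∈ Ioo (0 : ℝ) 1) {n : WithTop ℕ∞} :
    ContDiffAt ℝ n Ifun u := by
  have h0 : u ≠ 0 := hu.1.ne'
  have h1 : 1 - u ≠ 0 := (sub_pos.2 hu.2).ne'
  unfold Ifun
  fun_prop (disch := assumption)

lemma Ifun_half : Ifun (1 / 2) = 0 := by
  rw [Ifun, show (1 : ℝ) - 1 / 2 = 1 / 2 by norm_num, one_div, log_inv]
  ring

lemma hasDerivAt_log_sub_log_one_sub_half :
    HasDerivAt (fun u ↦ log u - log (1 - u)) 4 (1 / 2) := by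
  have hsub : HasDerivAt (fun x : ℝ ↦ 1 - x) (-1) (1 / 2) := by
    simpa using (hasDerivAt_id (1 / 2 : ℝ)).const_sub 1
  have h := (hasDerivAt_log (by norm_num : (1 / 2 : ℝ) ≠ 0)).sub (hsub.log (by norm_num))
  refine h.congr_deriv ?_
  norm_num

lemma hasDerivAt_one_sub_two_mul (u : ℝ) : HasDerivAt (fun x : ℝ ↦ 1 - 2 * x) (-2) u := by
  simpa using ((hasDerivAt_id u).const_mul 2).const_sub 1

lemma hasDerivAt_inv_one_add_pow (p : ℕ) {u : ℝ} (hu : 1 + (1 - 2 * u) ^ p ≠ 0) :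
    HasDerivAt (fun u ↦ (1 + (1 - 2 * u) ^ p)⁻¹)
      (2 * p * (1 - 2 * u) ^ (p - 1) / (1 + (1 - 2 * u) ^ p) ^ 2) u := by
  refine (((hasDerivAt_one_sub_two_mul u).fun_pow p).const_add 1).inv hu |>.congr_deriv ?_
  ring

lemma hasDerivAt_two_mul_pow_div_one_add_pow_sq_half {p : ℕ} (hp : 2 ≤ p) :
    HasDerivAt (fun u : ℝ ↦ 2 * p * (1 - 2 * u) ^ (p - 1) / (1 + (1 - 2 * u) ^ p) ^ 2)
      (if p = 2 then -8 else 0) (1 / 2) := by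
  have hlin := hasDerivAt_one_sub_two_mul (1 / 2)
  have hnum := (hlin.fun_pow (p - 1)).const_mul (2 * p : ℝ)
  have hden := ((hlin.fun_pow p).const_add 1).fun_pow 2
  have hzero : (1 : ℝ) - 2 * (1 / 2) = 0 := by norm_num
  refine (hnum.div hden (by simp [zero_pow (by omega : p ≠ 0)])).congr_deriv ?_
  obtain rfl | hp3 := eq_or_ne p 2
  · norm_num
  · rw [if_neg hp3, hzero, zero_pow (by omega : p - 1 - 1 ≠ 0),
      zero_pow (by omega : p - 1 ≠ 0)]
    simp

/-- The branch of `Ups` in force near `u = 1/2`, written with `c = γ²/β²`. -/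
noncomputable def upsBranch (p : ℕ) (c u : ℝ) : ℝ :=
  c - Ifun u - c * (1 + (1 - 2 * u) ^ p)⁻¹

lemma Ups_eventuallyEq_upsBranch (p : ℕ) (β γ : ℝ) {lam : ℝ}
    (hlam : lam < 1 - γ / β ^ 2) :
    Ups p β γ lam =ᶠ[𝓝 (1 / 2)] upsBranch p (γ ^ 2 / β ^ 2) := by
  have hcont : ContinuousAt (fun u : ℝ ↦ (1 - 2 * u) ^ p) (1 / 2) := by fun_prop
  have hhalf : γ / β ^ 2 + lam - 1 < (1 - 2 * (1 / 2 : ℝ)) ^ p := by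
    rw [show (1 : ℝ) - 2 * (1 / 2) = 0 by norm_num]
    linarith [(pow_nonneg le_rfl p : (0 : ℝ) ≤ 0 ^ p)]
  filter_upwards [hcont.eventually (eventually_gt_nhds hhalf)] with u hu
  rw [Ups, if_pos hu.le, upsBranch, div_mul_eq_div_div, div_eq_mul_inv (γ ^ 2 / β ^ 2)]

lemma upsBranch_half {p : ℕ} (hp : p ≠ 0) (c : ℝ) : upsBranch p c (1 / 2) = 0 := by
  rw [upsBranch, Ifun_half]
  norm_num [zero_pow hp]

lemma hasDerivAt_upsBranch (p : ℕ) (c : ℝ) {u : ℝ} (hu : u ∈ Ioo (0 : ℝ) 1) :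
    HasDerivAt (upsBranch p c)
      (-(log u - log (1 - u)) - c * (2 * p * (1 - 2 * u) ^ (p - 1) / (1 + (1 - 2 * u) ^ p) ^ 2))
      u := by
  have hpos := one_add_pow_pos (t := 1 - 2 * u) (by linarith [hu.2]) p
  exact ((hasDerivAt_const u c).sub (hasDerivAt_Ifun hu)).sub
    ((hasDerivAt_inv_one_add_pow p hpos.ne').const_mul c) |>.congr_deriv (by ring)

lemma deriv_upsBranch_half {p : ℕ} (hp : 2 ≤ p) (c : ℝ) :
    deriv (upsBranch p c) (1 / 2) = 0 := by
  rw [(hasDerivAt_upsBranch p c (by norm_num)).deriv]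
  norm_num [zero_pow (by omega : p - 1 ≠ 0)]

lemma contDiffAt_upsBranch (p : ℕ) (c : ℝ) {u : ℝ} (hu : u ∈ Ioo (0 : ℝ) 1)
    {n : WithTop ℕ∞} :
    ContDiffAt ℝ n (upsBranch p c) u := by
  have hpos := one_add_pow_pos (t := 1 - 2 * u) (by linarith [hu.2]) p
  have hIfun := contDiffAt_Ifun hu (n := n)
  unfold upsBranch
  fun_prop (disch := exact hpos.ne')

lemma iteratedDeriv_two_upsBranch_half {p : ℕ} (hp : 2 ≤ p) (c : ℝ) :
    iteratedDeriv 2 (upsBranch p c) (1 / 2) = if p = 2 then 4 * (2 * c - 1) else -4 := by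
  have hderiv : ∀ᶠ u in 𝓝 (1 / 2 : ℝ), HasDerivAt (upsBranch p c) _ u :=
    eventually_of_mem (Ioo_mem_nhds (by norm_num) (by norm_num)) fun u hu ↦
      hasDerivAt_upsBranch p c hu
  rw [iteratedDeriv_two_eq_of_hasDerivAt hderiv
    (hasDerivAt_log_sub_log_one_sub_half.neg.sub
      ((hasDerivAt_two_mul_pow_div_one_add_pow_sq_half hp).const_mul c))]
  split_ifs <;> ring

theorem stmt6_general (p : ℕ) (hp : 2 ≤ p) (β γ lam : ℝ)
    (hlam : lam ∈ Set.Ioo (0 : ℝ) (1 - γ / β ^ 2)) :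
    Ups p β γ lam (1 / 2) = 0 ∧
    deriv (Ups p β γ lam) (1 / 2) = 0 ∧
    ContDiffAt ℝ 2 (Ups p β γ lam) (1 / 2) ∧
    iteratedDeriv 2 (Ups p β γ lam) (1 / 2) =
      (if p = 2 then 4 * (2 * γ ^ 2 / β ^ 2 - 1) else -4) := by
  have hUps := Ups_eventuallyEq_upsBranch p β γ hlam.2
  refine ⟨?_, ?_, ?_, ?_⟩
  · rw [hUps.eq_of_nhds, upsBranch_half (by omega)]
  · rw [hUps.deriv_eq, deriv_upsBranch_half hp]
  · exact (contDiffAt_upsBranch p _ (by norm_num)).congr_of_eventuallyEq hUps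
  · rw [hUps.iteratedDeriv_eq, iteratedDeriv_two_upsBranch_half hp, mul_div_assoc]

/-- Lemma 3.2 (local behavior of `Υ` at `u = 1/2`). -/
theorem stmt6 (p : ℕ) (hp : 2 ≤ p) (β γ lam : ℝ) (hβ : 0 < β) (hγ : 0 < γ)
    (hγβ : γ < β ^ 2) (hlam : lam ∈ Set.Ioo (0 : ℝ) (1 - γ / β ^ 2)) :
    Ups p β γ lam (1 / 2) = 0 ∧
    deriv (Ups p β γ lam) (1 / 2) = 0 ∧
    ContDiffAt ℝ 2 (Ups p β γ lam) (1 / 2) ∧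
    iteratedDeriv 2 (Ups p β γ lam) (1 / 2) =
      (if p = 2 then 4 * (2 * γ ^ 2 / β ^ 2 - 1) else -4) :=
  stmt6_general p hp β γ lam hlam
end

section
/- (Lemma 3.2, the case p = 2.) Let β, γ > 0 satisfy γ ≤ β/√2 and γ < β², and let λ ∈ (0, 1 − γ/β²). Then Υ_{2,β,γ}(u) ≤ 0 for all u ∈ [0,1]. (For p = 2 and γ < β² the first branch of the definition always applies, i.e. Υ_{2,β,γ}(u) = γ²/β² − I(u) − γ²/(β²(1+(1−2u)²)); the proof uses I(u) ≥ (1−2u)²/2 and the monotonicity of Υ in γ²/β².) -/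
open Real

/-!
Write `I(u) = log 2 - H(u)` with `H` the binary entropy. The Pinsker-type bound
`H(u) ≤ log 2 - 2 (u - 1/2)²`, i.e. `I(u) ≥ (1 - 2u)² / 2`, holds on `[1/2, 1]` because
`H(u) + 2 (u - 1/2)²` is decreasing there (with `x = 2u - 1` its derivative is
`2x - 2 artanh x ≤ 0`), and on `[0, 1/2]` by the symmetry `H(1 - u) = H(u)`.
On the first branch of `Υ`, with `c = γ²/β² ≤ 1/2` and `t = (1 - 2u)²`, it remains to note
`c - c/(1 + t) ≤ t/2 ≤ I(u)`.
-/

theorem two_mul_le_log_one_add_sub_log_one_sub {x : ℝ} (hx₀ : 0 ≤ x) (hx₁ : x < 1) :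
    2 * x ≤ log (1 + x) - log (1 - x) := by
  have hsum := hasSum_log_sub_log_of_abs_lt_one (abs_lt.2 ⟨by linarith, hx₁⟩)
  simpa using le_hasSum hsum 0 fun k _ ↦ by positivity

theorem antitoneOn_binEntropy_add_two_mul_sq :
    AntitoneOn (fun p ↦ binEntropy p + 2 * (p - 2⁻¹) ^ 2) (Set.Icc 2⁻¹ 1) := by
  refine antitoneOn_of_hasDerivWithinAt_nonpos (convex_Icc _ _) (by fun_prop)
    (f' := fun p ↦ log (1 - p) - log p + 4 * (p - 2⁻¹)) (fun p hp ↦ ?_) fun p hp ↦ ?_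
  all_goals rw [interior_Icc] at hp; obtain ⟨hp₀, hp₁⟩ := hp
  · have h : HasDerivAt (fun q ↦ binEntropy q + 2 * (q - 2⁻¹) ^ 2)
        (log (1 - p) - log p + 4 * (p - 2⁻¹)) p := by
      refine ((hasDerivAt_binEntropy (by linarith) (by linarith)).fun_add
        ((((hasDerivAt_id' p).sub_const 2⁻¹).fun_pow 2).const_mul 2)).congr_deriv ?_
      push_cast; ring
    exact h.hasDerivWithinAt
  · have hlog :=
      two_mul_le_log_one_add_sub_log_one_sub (x := 2 * p - 1) (by linarith) (by linarith)
    rw [show 1 + (2 * p - 1) = 2 * p by ring, show 1 - (2 * p - 1) = 2 * (1 - p) by ring,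
      log_mul two_ne_zero (by linarith), log_mul two_ne_zero (by linarith)] at hlog
    linarith

theorem binEntropy_le_log_two_sub_two_mul_sq {p : ℝ} (hp : p ∈ Set.Icc (0 : ℝ) 1) :
    binEntropy p ≤ log 2 - 2 * (p - 2⁻¹) ^ 2 := by
  wlog hp₂ : 2⁻¹ ≤ p generalizing p
  · have h := this (p := 1 - p) ⟨by linarith [hp.2], by linarith [hp.1]⟩ (by linarith)
    rwa [binEntropy_one_sub, show 1 - p - 2⁻¹ = -(p - 2⁻¹) by ring, neg_sq] at h
  have := antitoneOn_binEntropy_add_two_mul_sq ⟨le_rfl, by norm_num⟩ ⟨hp₂, hp.2⟩ hp₂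
  simp only [binEntropy_two_inv, sub_self] at this
  linarith

theorem Ifun_eq_log_two_sub_binEntropy (u : ℝ) : Ifun u = log 2 - binEntropy u := by
  simp only [Ifun, binEntropy, log_inv]; ring

theorem sq_one_sub_two_mul_div_two_le_Ifun {u : ℝ} (hu : u ∈ Set.Icc (0 : ℝ) 1) :
    (1 - 2 * u) ^ 2 / 2 ≤ Ifun u := by
  rw [Ifun_eq_log_two_sub_binEntropy]
  linarith [binEntropy_le_log_two_sub_two_mul_sq hu]

theorem sq_div_sq_le_half {β γ : ℝ} (hγ : 0 ≤ γ) (h : γ ≤ β / √2) :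
    γ ^ 2 / β ^ 2 ≤ 1 / 2 := by
  have hsq : γ ^ 2 ≤ β ^ 2 / 2 :=
    calc γ ^ 2 ≤ (β / √2) ^ 2 := pow_le_pow_left₀ hγ h 2
      _ = β ^ 2 / 2 := by rw [div_pow, sq_sqrt zero_le_two]
  exact div_le_of_le_mul₀ (sq_nonneg β) one_half_pos.le (by linarith)

theorem stmt7_general (β γ lam : ℝ) (hγ : 0 < γ)
    (hγ2 : γ ≤ β / Real.sqrt 2)
    (hlam : lam ∈ Set.Ioo (0 : ℝ) (1 - γ / β ^ 2)) :
    ∀ u ∈ Set.Icc (0 : ℝ) 1, Ups 2 β γ lam u ≤ 0 := by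
  intro u hu
  have hbranch : γ / β ^ 2 + lam - 1 ≤ (1 - 2 * u) ^ 2 := by
    linarith [hlam.2, sq_nonneg (1 - 2 * u)]
  rw [Ups, if_pos hbranch, ← div_div]
  set c := γ ^ 2 / β ^ 2
  set t := (1 - 2 * u) ^ 2
  have hc : c ≤ 1 / 2 := sq_div_sq_le_half hγ.le hγ2
  have ht : 0 ≤ t := sq_nonneg _
  have hI : t / 2 ≤ Ifun u := sq_one_sub_two_mul_div_two_le_Ifun hu
  have hgap : c - c / (1 + t) ≤ t / 2 := by
    rw [sub_le_comm, le_div_iff₀ (by positivity)]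
    nlinarith [mul_nonneg (sub_nonneg.2 hc) ht]
  linarith

/-- Lemma 3.2, the case `p = 2`: if `γ ≤ β/√2` and `γ < β²` then `Υ_{2,β,γ} ≤ 0` on `[0,1]`. -/
theorem stmt7 (β γ lam : ℝ) (hβ : 0 < β) (hγ : 0 < γ)
    (hγ2 : γ ≤ β / Real.sqrt 2) (hγβ : γ < β ^ 2)
    (hlam : lam ∈ Set.Ioo (0 : ℝ) (1 - γ / β ^ 2)) :
    ∀ u ∈ Set.Icc (0 : ℝ) 1, Ups 2 β γ lam u ≤ 0 :=
  stmt7_general β γ lam hγ hγ2 hlam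
end

section
/- (Occupation time of a given distance by the hypercube walk, from the proof of Lemma 4.2.) Fix ω ∈ (1/2,1) and set ν = ⌊N^ω⌋. Define ρ_N(d) = E[ Σ_{i=1}^ν 1{ dist(Y_N(i), Y_N(0)) = d } ]. Then for all sufficiently large N and all d with 1 ≤ d ≤ ν: e^{−ν²/N} ≤ ρ_N(d) ≤ 2. -/
open MeasureTheory ProbabilityTheory Filter Real
open scoped ENNReal Classical

noncomputable section

/-- Deterministic hypercube walk path: at step `k` flip the sign of coordinate `I k`,
starting from the configuration `y`. -/
def walk (I : ℕ → ℕ) (y : ℕ → ℝ) : ℕ → ℕ → ℝ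
  | 0 => y
  | k + 1 => Function.update (walk I y k) (I k) (-(walk I y k (I k)))

/-- The all-ones starting configuration `(1,…,1)`. -/
def onevec : ℕ → ℝ := fun _ => 1

/-- Hamming distance between two configurations, restricted to the first `N` coordinates. -/
def hdist (N : ℕ) (σ τ : ℕ → ℝ) : ℕ := ((Finset.range N).filter fun i => σ i ≠ τ i).card

/-- `r(N) = N^{1/2} e^{Nγ²/(2β²)}`. -/
def rN (β γ : ℝ) (N : ℕ) : ℝ := Real.sqrt N * Real.exp (N * γ ^ 2 / (2 * β ^ 2))

/-- Block length `ν = ⌊N^w⌋`. -/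
def nuN (w : ℝ) (N : ℕ) : ℕ := ⌊(N : ℝ) ^ w⌋₊

/-- The simple random walk on the `N`-dimensional hypercube started at `(1,…,1)`,
driven by the coordinate choices `I N`. -/
def Ywalk {Ω : Type*} (I : ℕ → ℕ → Ω → ℕ) (N k : ℕ) (ω : Ω) : ℕ → ℝ :=
  walk (fun j => I N j ω) onevec k

end

/-!
Write `D i` for the Hamming distance between `Y(i)` and `Y(0)`, and `E ℓ` for the expected number
of times `i ∈ [1, ν]` with `D i = ℓ`.

Lower bound: `D d = d` as soon as the first `d` coordinate choices are distinct, an event of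
probability `∏_{j<d} (1 - j/N) ≥ exp(-d²/N)` when `2d ≤ N`.

Upper bound: `D` moves by `±1` from `D 0 = 0`, so it visits level `d` at most once more than it
steps down from level `d` or `d + 1`. As `I i` is uniform and independent of `Y(0), …, Y(i)`, a
down-step at time `i` from level `ℓ` has probability `(ℓ/N) P(D i = ℓ)`, and `ℓ ≤ i ≤ ν`. Hence
`E d ≤ 1 + (ν/N)(E d + E (d+1))` for every `d`; at a maximiser of `E` this gives
`max E ≤ 1 + (2ν/N) max E`, so `max E ≤ 2` once `4ν ≤ N`, which holds for large `N` as `w < 1`.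
-/

open Finset

lemma walk_congr {I I' : ℕ → ℕ} {k : ℕ} (h : ∀ j < k, I j = I' j) (y : ℕ → ℝ) :
    walk I y k = walk I' y k := by
  induction k with
  | zero => rfl
  | succ k ih => simp only [walk, ih fun j hj => h j (by omega), h k k.lt_succ_self]

section Walk

variable {N : ℕ} {I : ℕ → ℕ}

lemma walk_onevec_eq_one_or_eq_neg_one (k s : ℕ) :
    walk I onevec k s = 1 ∨ walk I onevec k s = -1 := by
  induction k with
  | zero => exact Or.inl rfl
  | succ k ih =>
    by_cases h : s = I k
    · subst h
      rcases ih with h1 | h1 <;> simp [walk, h1]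
    · simpa only [walk, Function.update_of_ne h] using ih

lemma walk_onevec_of_forall_ne {k s : ℕ} (h : ∀ j < k, I j ≠ s) : walk I onevec k s = 1 := by
  induction k with
  | zero => rfl
  | succ k ih =>
    rw [walk, Function.update_of_ne (h k k.lt_succ_self).symm]
    exact ih fun j hj => h j (by omega)

variable (N I) in
noncomputable def flipSet (k : ℕ) : Finset ℕ := {s ∈ range N | walk I onevec k s ≠ onevec s}

lemma card_flipSet (k : ℕ) : #(flipSet N I k) = hdist N (walk I onevec k) onevec := rfl

lemma mem_flipSet {k s : ℕ} : s ∈ flipSet N I k ↔ s < N ∧ walk I onevec k s ≠ 1 := by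
  rw [flipSet, mem_filter, mem_range]
  rfl

lemma flipSet_succ_of_eq_one {k : ℕ} (hk : I k < N) (h : walk I onevec k (I k) = 1) :
    flipSet N I (k + 1) = insert (I k) (flipSet N I k) := by
  ext s
  simp only [mem_flipSet, mem_insert, walk, Function.update_apply]
  split_ifs with hs
  · subst hs; norm_num [hk, h]
  · simp [hs]

lemma flipSet_succ_of_ne_one {k : ℕ} (h : walk I onevec k (I k) ≠ 1) :
    flipSet N I (k + 1) = (flipSet N I k).erase (I k) := by
  have hneg := (walk_onevec_eq_one_or_eq_neg_one k (I k)).resolve_left h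
  ext s
  simp only [mem_flipSet, mem_erase, walk, Function.update_apply]
  split_ifs with hs
  · subst hs; simp [hneg]
  · simp [hs]

lemma flipSet_subset_image (k : ℕ) : flipSet N I k ⊆ (range k).image I := fun s hs => by
  by_contra hnot
  exact (mem_flipSet.mp hs).2 (walk_onevec_of_forall_ne fun j hj hjs =>
    hnot (mem_image.mpr ⟨j, mem_range.mpr hj, hjs⟩))

lemma hdist_walk_succ_of_eq_one {k : ℕ} (hk : I k < N) (h : walk I onevec k (I k) = 1) :
    hdist N (walk I onevec (k + 1)) onevec = hdist N (walk I onevec k) onevec + 1 := by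
  rw [← card_flipSet, ← card_flipSet, flipSet_succ_of_eq_one hk h,
    card_insert_of_notMem fun hmem => (mem_flipSet.mp hmem).2 h]

lemma hdist_walk_succ_of_ne_one {k : ℕ} (hk : I k < N) (h : walk I onevec k (I k) ≠ 1) :
    hdist N (walk I onevec (k + 1)) onevec + 1 = hdist N (walk I onevec k) onevec := by
  rw [← card_flipSet, ← card_flipSet, flipSet_succ_of_ne_one h,
    card_erase_add_one (mem_flipSet.mpr ⟨hk, h⟩)]

lemma hdist_walk_le (k : ℕ) : hdist N (walk I onevec k) onevec ≤ k :=
  (card_le_card (flipSet_subset_image k)).trans (card_image_le.trans (card_range k).le)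

lemma hdist_walk_self_of_injOn {d : ℕ} (hN : ∀ j < d, I j < N)
    (hinj : Set.InjOn I (range d)) : hdist N (walk I onevec d) onevec = d := by
  induction d with
  | zero => exact Nat.le_zero.mp (hdist_walk_le 0)
  | succ d ih =>
    rw [range_add_one, coe_insert] at hinj
    have hfresh : walk I onevec d (I d) = 1 := walk_onevec_of_forall_ne fun j hj hjd =>
      hj.ne (hinj (by simp; omega) (by simp) hjd)
    rw [hdist_walk_succ_of_eq_one (hN d d.lt_succ_self) hfresh,
      ih (fun j hj => hN j (by omega)) (hinj.mono (Set.subset_insert _ _))]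

end Walk

lemma card_visits_le_one_add_card_downSteps (D : ℕ → ℕ) (h0 : D 0 = 0)
    (hstep : ∀ n, D (n + 1) = D n + 1 ∨ D (n + 1) + 1 = D n) (d n : ℕ) :
    #{i ∈ Icc 1 n | D i = d} ≤
      1 + #{i ∈ Icc 1 n | D (i + 1) < D i ∧ (D i = d ∨ D i = d + 1)} := by
  -- Between two visits to `d` the path steps down from `d` or from `d + 1`.
  have key : ∀ m, #{i ∈ Icc 1 m | D i = d} ≤ (if d ≤ D m then 1 else 0) +
      #{i ∈ range m | D (i + 1) < D i ∧ (D i = d ∨ D i = d + 1)} := by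
    intro m
    induction m with
    | zero => simp
    | succ m ih =>
      rw [card_filter, sum_Icc_succ_top (by omega), ← card_filter, range_add_one, filter_insert]
      rcases hstep m with hs | hs <;> split_ifs at * <;> simp [card_insert_of_notMem] <;> omega
  have hsub : {i ∈ range n | D (i + 1) < D i ∧ (D i = d ∨ D i = d + 1)} ⊆
      {i ∈ Icc 1 n | D (i + 1) < D i ∧ (D i = d ∨ D i = d + 1)} := by
    intro i hi
    simp only [mem_filter, mem_range, mem_Icc] at hi ⊢
    have : i ≠ 0 := by rintro rfl; omega
    omega
  have hn := key n
  have hcard := card_le_card hsub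
  split_ifs at hn <;> omega

section Choice

variable {Ω : Type*}

def firstChoices (I : ℕ → Ω → ℕ) (n : ℕ) (ω : Ω) : range n → ℕ := fun j => I j ω

def DependsOnFirst (I : ℕ → Ω → ℕ) (n : ℕ) (A : Set Ω) : Prop :=
  ∀ ω ω', (∀ j < n, I j ω = I j ω') → (ω ∈ A ↔ ω' ∈ A)

variable {I : ℕ → Ω → ℕ} {n : ℕ} {A B : Set Ω}

lemma DependsOnFirst.inter (hA : DependsOnFirst I n A) (hB : DependsOnFirst I n B) :
    DependsOnFirst I n (A ∩ B) := fun ω ω' h => and_congr (hA ω ω' h) (hB ω ω' h)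

lemma DependsOnFirst.union (hA : DependsOnFirst I n A) (hB : DependsOnFirst I n B) :
    DependsOnFirst I n (A ∪ B) := fun ω ω' h => or_congr (hA ω ω' h) (hB ω ω' h)

lemma DependsOnFirst.mono (hA : DependsOnFirst I n A) {m : ℕ} (hnm : n ≤ m) :
    DependsOnFirst I m A := fun ω ω' h => hA ω ω' fun j hj => h j (by omega)

lemma DependsOnFirst.setOf_apply_mem {S : Ω → Finset ℕ}
    (hS : ∀ s, DependsOnFirst I n {ω | s ∈ S ω}) :
    DependsOnFirst I (n + 1) {ω | I n ω ∈ S ω} := fun ω ω' h => by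
  simp only [Set.mem_ofPred_eq, h n n.lt_succ_self]
  exact hS _ ω ω' fun j hj => h j (by omega)

lemma DependsOnFirst.eq_preimage (hA : DependsOnFirst I n A) :
    A = firstChoices I n ⁻¹' (firstChoices I n '' A) := by
  refine (Set.subset_preimage_image _ _).antisymm fun ω ⟨ω', hω', heq⟩ => ?_
  exact (hA ω' ω fun j hj => congrFun heq ⟨j, mem_range.mpr hj⟩).mp hω'

lemma dependsOnFirst_setOf_walk (I : ℕ → Ω → ℕ) {i n : ℕ} (hi : i ≤ n) (P : (ℕ → ℝ) → Prop) :
    DependsOnFirst I n {ω | P (walk (I · ω) onevec i)} := fun _ _ h =>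
  Iff.of_eq (congrArg P (walk_congr (fun j hj => h j (by omega)) onevec))

variable [MeasurableSpace Ω]

lemma DependsOnFirst.measurableSet (hmeas : ∀ k, Measurable (I k))
    (hA : DependsOnFirst I n A) : MeasurableSet A := by
  rw [hA.eq_preimage]
  exact measurable_pi_lambda (firstChoices I n) (fun j => hmeas j)
    (Set.to_countable _).measurableSet

lemma sum_measure_inter_setOf_mem_eq_mul (μ : Measure Ω) (hA : MeasurableSet A)
    {S : Ω → Finset ℕ} (hS : ∀ s, MeasurableSet {ω | s ∈ S ω}) {F : Finset ℕ} {m : ℕ}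
    (hSF : ∀ ω ∈ A, S ω ⊆ F) (hcard : ∀ ω ∈ A, #(S ω) = m) :
    ∑ s ∈ F, μ (A ∩ {ω | s ∈ S ω}) = m * μ A := by
  have hpointwise : ∀ ω, ∑ s ∈ F, (A ∩ {ω | s ∈ S ω}).indicator 1 ω =
      A.indicator (fun _ => (m : ℝ≥0∞)) ω := by
    intro ω
    by_cases hω : ω ∈ A
    · rw [Set.indicator_of_mem hω, ← hcard ω hω, ← filter_mem_eq_inter.trans
        (inter_eq_right.mpr (hSF ω hω)), card_filter]
      simp [Set.indicator_apply, hω]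
    · simp [hω]
  simp_rw [← lintegral_indicator_one (hA.inter (hS _))]
  rw [← lintegral_finsetSum _ fun s _ => measurable_one.indicator (hA.inter (hS s)),
    lintegral_congr hpointwise, lintegral_indicator_const hA]

section Counting

variable {μ : Measure Ω} {ι : Type*} {A B : ι → Set Ω}

lemma integrable_card_filter_mem [IsFiniteMeasure μ] (s : Finset ι)
    (hA : ∀ i, MeasurableSet (A i)) : Integrable (fun ω => (#{i ∈ s | ω ∈ A i} : ℝ)) μ := by
  simp_rw [card_filter, Nat.cast_sum, Nat.cast_ite, Nat.cast_one, Nat.cast_zero]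
  exact integrable_finsetSum _ fun i _ => (integrable_const 1).indicator (hA i)

lemma integral_card_filter_mem [IsFiniteMeasure μ] (s : Finset ι)
    (hA : ∀ i, MeasurableSet (A i)) : ∫ ω, (#{i ∈ s | ω ∈ A i} : ℝ) ∂μ = ∑ i ∈ s, μ.real (A i) := by
  simp_rw [card_filter, Nat.cast_sum, Nat.cast_ite, Nat.cast_one, Nat.cast_zero]
  rw [integral_finsetSum _ fun i _ => (integrable_const 1).indicator (hA i)]
  exact sum_congr rfl fun i _ => integral_indicator_one (hA i)

lemma sum_measureReal_le_of_forall_card_le [IsProbabilityMeasure μ] (s t : Finset ι)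
    (hA : ∀ i, MeasurableSet (A i)) (hB : ∀ i, MeasurableSet (B i)) (c : ℕ)
    (h : ∀ ω, #{i ∈ s | ω ∈ A i} ≤ c + #{i ∈ t | ω ∈ B i}) :
    ∑ i ∈ s, μ.real (A i) ≤ c + ∑ i ∈ t, μ.real (B i) := by
  rw [← integral_card_filter_mem s hA, ← integral_card_filter_mem t hB]
  calc ∫ ω, (#{i ∈ s | ω ∈ A i} : ℝ) ∂μ ≤ ∫ ω, ((c : ℝ) + #{i ∈ t | ω ∈ B i}) ∂μ :=
        integral_mono (integrable_card_filter_mem s hA)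
          ((integrable_const _).add (integrable_card_filter_mem t hB)) fun ω => by
            beta_reduce
            exact_mod_cast h ω
    _ = c + ∫ ω, (#{i ∈ t | ω ∈ B i} : ℝ) ∂μ := by
        rw [integral_add (integrable_const _) (integrable_card_filter_mem t hB)]
        simp

end Counting

structure IsIIDUniform (μ : Measure Ω) (N : ℕ) (I : ℕ → Ω → ℕ) : Prop where
  measurable : ∀ k, Measurable (I k)
  lt : ∀ k ω, I k ω < N
  measure_eq : ∀ k s, s < N → μ {ω | I k ω = s} = (N : ℝ≥0∞)⁻¹
  iIndepFun : iIndepFun I μ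

namespace IsIIDUniform

variable {μ : Measure Ω} {N : ℕ} (hI : IsIIDUniform μ N I)
include hI

lemma measure_inter_setOf_apply_eq (hA : DependsOnFirst I n A) {s : ℕ} (hs : s < N) :
    μ (A ∩ {ω | I n ω = s}) = μ A * (N : ℝ≥0∞)⁻¹ := by
  have hindep : IndepFun (firstChoices I n) (fun ω (j : ({n} : Finset ℕ)) => I j ω) μ :=
    hI.iIndepFun.indepFun_finset (range n) {n} (by simp) hI.measurable
  have hs' : {ω | I n ω = s} = (fun ω (j : ({n} : Finset ℕ)) => I j ω) ⁻¹'
      {x | x ⟨n, mem_singleton_self n⟩ = s} := rfl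
  nth_rewrite 1 [hA.eq_preimage]
  rw [hs', hindep.measure_inter_preimage_eq_mul _ _
    (Set.to_countable _).measurableSet (Set.to_countable _).measurableSet, ← hs',
    ← hA.eq_preimage, hI.measure_eq n s hs]

lemma measureReal_inter_setOf_apply_mem (hA : DependsOnFirst I n A) {S : Ω → Finset ℕ}
    (hS : ∀ s, DependsOnFirst I n {ω | s ∈ S ω}) {m : ℕ} (hSN : ∀ ω ∈ A, S ω ⊆ range N)
    (hcard : ∀ ω ∈ A, #(S ω) = m) :
    μ.real (A ∩ {ω | I n ω ∈ S ω}) = m / N * μ.real A := by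
  have hsplit : A ∩ {ω | I n ω ∈ S ω} =
      ⋃ s ∈ range N, (A ∩ {ω | s ∈ S ω}) ∩ {ω | I n ω = s} := by
    ext ω
    simp only [Set.mem_inter_iff, Set.mem_iUnion, mem_range, Set.mem_ofPred_eq]
    constructor
    · rintro ⟨hω, hSω⟩
      exact ⟨I n ω, hI.lt n ω, ⟨hω, hSω⟩, rfl⟩
    · rintro ⟨s, -, ⟨hω, hSω⟩, rfl⟩
      exact ⟨hω, hSω⟩
  have hdisj : Set.PairwiseDisjoint ↑(range N) fun s => (A ∩ {ω | s ∈ S ω}) ∩ {ω | I n ω = s} :=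
    fun s _ t _ hst => Set.disjoint_left.mpr fun ω ⟨_, hs⟩ ⟨_, ht⟩ => hst (hs.symm.trans ht)
  have hmeasure : μ (A ∩ {ω | I n ω ∈ S ω}) = m * μ A * (N : ℝ≥0∞)⁻¹ := by
    rw [hsplit, measure_biUnion_finset hdisj fun s _ =>
      ((hA.inter (hS s)).measurableSet hI.measurable).inter
        (hI.measurable n (measurableSet_singleton s)),
      sum_congr rfl fun s hs => hI.measure_inter_setOf_apply_eq (hA.inter (hS s)) (mem_range.mp hs),
      ← sum_mul, sum_measure_inter_setOf_mem_eq_mul μ (hA.measurableSet hI.measurable)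
        (fun s => (hS s).measurableSet hI.measurable) hSN hcard]
  rw [measureReal_def, hmeasure, measureReal_def, ENNReal.toReal_mul, ENNReal.toReal_mul]
  simp [div_eq_mul_inv, mul_right_comm]

end IsIIDUniform

end Choice

section HypercubeWalk

variable {Ω : Type*}

noncomputable def walkDist (N : ℕ) (I : ℕ → Ω → ℕ) (i : ℕ) (ω : Ω) : ℕ :=
  hdist N (walk (I · ω) onevec i) onevec

-- Re-flipping a coordinate that already differs from the start is exactly a step towards `Y(0)`.
def downStepSet (N : ℕ) (I : ℕ → Ω → ℕ) (i ℓ : ℕ) : Set Ω :=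
  {ω | walkDist N I i ω = ℓ} ∩ {ω | I i ω ∈ flipSet N (I · ω) i}

variable {N : ℕ} {I : ℕ → Ω → ℕ}

lemma dependsOnFirst_walkDist_eq (I : ℕ → Ω → ℕ) (i ℓ : ℕ) :
    DependsOnFirst I i {ω | walkDist N I i ω = ℓ} :=
  dependsOnFirst_setOf_walk I le_rfl fun y => hdist N y onevec = ℓ

lemma dependsOnFirst_mem_flipSet (I : ℕ → Ω → ℕ) (i s : ℕ) :
    DependsOnFirst I i {ω | s ∈ flipSet N (I · ω) i} :=
  dependsOnFirst_setOf_walk I le_rfl fun y => s ∈ {s ∈ range N | y s ≠ onevec s}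

lemma dependsOnFirst_downStepSet (I : ℕ → Ω → ℕ) (i ℓ : ℕ) :
    DependsOnFirst I (i + 1) (downStepSet N I i ℓ) :=
  ((dependsOnFirst_walkDist_eq I i ℓ).mono i.le_succ).inter
    (DependsOnFirst.setOf_apply_mem (dependsOnFirst_mem_flipSet I i))

lemma setOf_walkDist_eq_eq_empty {i ℓ : ℕ} (hiℓ : i < ℓ) : {ω | walkDist N I i ω = ℓ} = ∅ :=
  Set.eq_empty_of_forall_notMem fun _ hω => hiℓ.not_ge (hω ▸ hdist_walk_le i)

lemma card_visits_le_one_add_card_downStepSet {ω : Ω} (hlt : ∀ k, I k ω < N) (d n : ℕ) :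
    #{i ∈ Icc 1 n | walkDist N I i ω = d} ≤
      1 + #{i ∈ Icc 1 n | ω ∈ downStepSet N I i d ∪ downStepSet N I i (d + 1)} := by
  have hstep : ∀ k, walkDist N I (k + 1) ω = walkDist N I k ω + 1 ∨
      walkDist N I (k + 1) ω + 1 = walkDist N I k ω := fun k => by
    by_cases h : walk (I · ω) onevec k (I k ω) = 1
    · exact Or.inl (hdist_walk_succ_of_eq_one (hlt k) h)
    · exact Or.inr (hdist_walk_succ_of_ne_one (hlt k) h)
  have hdown : ∀ k, walkDist N I (k + 1) ω < walkDist N I k ω → I k ω ∈ flipSet N (I · ω) k :=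
    fun k hk => mem_flipSet.mpr ⟨hlt k, fun h => by
      have : walkDist N I (k + 1) ω = walkDist N I k ω + 1 := hdist_walk_succ_of_eq_one (hlt k) h
      omega⟩
  have hsub : {i ∈ Icc 1 n | walkDist N I (i + 1) ω < walkDist N I i ω ∧
      (walkDist N I i ω = d ∨ walkDist N I i ω = d + 1)} ⊆
      {i ∈ Icc 1 n | ω ∈ downStepSet N I i d ∪ downStepSet N I i (d + 1)} := by
    intro i hi
    simp only [mem_filter] at hi ⊢
    obtain ⟨hi, hlt, hd | hd⟩ := hi
    · exact ⟨hi, Or.inl ⟨hd, hdown i hlt⟩⟩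
    · exact ⟨hi, Or.inr ⟨hd, hdown i hlt⟩⟩
  have hpath := card_visits_le_one_add_card_downSteps (walkDist N I · ω)
    (Nat.le_zero.mp (hdist_walk_le 0)) hstep d n
  exact hpath.trans (Nat.add_le_add_left (card_le_card hsub) 1)

variable [MeasurableSpace Ω] {μ : Measure Ω}

noncomputable def occupation (μ : Measure Ω) (N : ℕ) (I : ℕ → Ω → ℕ) (n ℓ : ℕ) : ℝ :=
  ∑ i ∈ Icc 1 n, μ.real {ω | walkDist N I i ω = ℓ}

lemma occupation_eq_zero_of_lt {n ℓ : ℕ} (hnℓ : n < ℓ) : occupation μ N I n ℓ = 0 :=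
  sum_eq_zero fun i hi => by
    rw [setOf_walkDist_eq_eq_empty ((mem_Icc.mp hi).2.trans_lt hnℓ), measureReal_empty]

namespace IsIIDUniform

variable (hI : IsIIDUniform μ N I)
include hI

lemma measureReal_downStepSet (i ℓ : ℕ) :
    μ.real (downStepSet N I i ℓ) = ℓ / N * μ.real {ω | walkDist N I i ω = ℓ} :=
  hI.measureReal_inter_setOf_apply_mem (dependsOnFirst_walkDist_eq I i ℓ)
    (dependsOnFirst_mem_flipSet I i) (fun _ _ => filter_subset _ _) fun _ hω => hω

lemma measureReal_downStepSet_le {i n : ℕ} (hin : i ≤ n) (ℓ : ℕ) :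
    μ.real (downStepSet N I i ℓ) ≤ n / N * μ.real {ω | walkDist N I i ω = ℓ} := by
  rw [hI.measureReal_downStepSet]
  rcases le_or_gt ℓ n with hℓ | hℓ
  · gcongr
  · simp [setOf_walkDist_eq_eq_empty (hin.trans_lt hℓ)]

lemma integral_sum_ite_eq_occupation (n d : ℕ) :
    ∫ ω, (∑ i ∈ Icc 1 n, if walkDist N I i ω = d then (1 : ℝ) else 0) ∂μ =
      occupation μ N I n d := by
  have := hI.iIndepFun.isProbabilityMeasure
  rw [occupation, ← integral_card_filter_mem _ fun i =>
    (dependsOnFirst_walkDist_eq I i d).measurableSet hI.measurable]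
  simp only [card_filter, Nat.cast_sum, Nat.cast_ite, Nat.cast_one, Nat.cast_zero,
    Set.mem_ofPred_eq]

lemma occupation_le (d n : ℕ) :
    occupation μ N I n d ≤ 1 + n / N * (occupation μ N I n d + occupation μ N I n (d + 1)) := by
  have := hI.iIndepFun.isProbabilityMeasure
  have hvisits := sum_measureReal_le_of_forall_card_le (μ := μ) (Icc 1 n) (Icc 1 n)
    (A := fun i => {ω | walkDist N I i ω = d})
    (B := fun i => downStepSet N I i d ∪ downStepSet N I i (d + 1))
    (fun i => (dependsOnFirst_walkDist_eq I i d).measurableSet hI.measurable)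
    (fun i => ((dependsOnFirst_downStepSet I i d).union
      ((dependsOnFirst_downStepSet I i (d + 1)))).measurableSet hI.measurable) 1
    fun ω => by
      convert card_visits_le_one_add_card_downStepSet (hI.lt · ω) d n
      exact Iff.rfl
  have hdown : ∀ i ∈ Icc 1 n, μ.real (downStepSet N I i d ∪ downStepSet N I i (d + 1)) ≤
      n / N * (μ.real {ω | walkDist N I i ω = d} + μ.real {ω | walkDist N I i ω = d + 1}) :=
    fun i hi => by
      rw [mul_add]
      exact (measureReal_union_le _ _).trans (add_le_add
        (hI.measureReal_downStepSet_le (mem_Icc.mp hi).2 d)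
        (hI.measureReal_downStepSet_le (mem_Icc.mp hi).2 (d + 1)))
  calc occupation μ N I n d ≤ 1 + ∑ i ∈ Icc 1 n,
        μ.real (downStepSet N I i d ∪ downStepSet N I i (d + 1)) := by exact_mod_cast hvisits
    _ ≤ _ := by
      rw [occupation, occupation, ← sum_add_distrib, mul_sum]
      gcongr with i hi
      exact hdown i hi

lemma measureReal_injOn (d : ℕ) :
    μ.real {ω | Set.InjOn (I · ω) (range d)} = ∏ j ∈ range d, ((N - j : ℕ) : ℝ) / N := by
  have := hI.iIndepFun.isProbabilityMeasure
  induction d with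
  | zero => simp
  | succ d ih =>
    have hA : DependsOnFirst I d {ω | Set.InjOn (I · ω) (range d)} := fun ω ω' h =>
      Set.EqOn.injOn_iff fun j hj => h j (mem_range.mp (mem_coe.mp hj))
    have hS : ∀ s, DependsOnFirst I d {ω | s ∈ range N \ (range d).image (I · ω)} :=
      fun s ω ω' h => by
        rw [Set.mem_ofPred_eq, Set.mem_ofPred_eq,
          image_congr fun j hj => h j (mem_range.mp (mem_coe.mp hj))]
    have hcard : ∀ ω ∈ {ω | Set.InjOn (I · ω) (range d)},
        #(range N \ (range d).image (I · ω)) = N - d := fun ω hω => by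
      rw [card_sdiff_of_subset, card_range, card_image_of_injOn hω, card_range]
      intro s hs
      obtain ⟨j, -, rfl⟩ := mem_image.mp hs
      exact mem_range.mpr (hI.lt j ω)
    have hset : {ω | Set.InjOn (I · ω) (range (d + 1))} = {ω | Set.InjOn (I · ω) (range d)} ∩
        {ω | I d ω ∈ range N \ (range d).image (I · ω)} := by
      ext ω
      rw [Set.mem_inter_iff, Set.mem_ofPred_eq, Set.mem_ofPred_eq, Set.mem_ofPred_eq,
        range_add_one, coe_insert, Set.injOn_insert (by simp)]
      simp [hI.lt, eq_comm]
    rw [hset, hI.measureReal_inter_setOf_apply_mem hA hS (fun _ _ => sdiff_subset) hcard, ih,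
      prod_range_succ, mul_comm]

lemma measureReal_injOn_le_occupation {d n : ℕ} (hd : 1 ≤ d) (hdn : d ≤ n) :
    μ.real {ω | Set.InjOn (I · ω) (range d)} ≤ occupation μ N I n d := by
  have := hI.iIndepFun.isProbabilityMeasure
  calc μ.real {ω | Set.InjOn (I · ω) (range d)} ≤ μ.real {ω | walkDist N I d ω = d} :=
        measureReal_mono fun ω hω => hdist_walk_self_of_injOn (fun j _ => hI.lt j ω) hω
    _ ≤ occupation μ N I n d :=
        single_le_sum (f := fun i => μ.real {ω | walkDist N I i ω = d})
          (fun _ _ => measureReal_nonneg) (mem_Icc.mpr ⟨hd, hdn⟩)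

end IsIIDUniform

end HypercubeWalk

lemma le_two_of_le_one_add_mul {E : ℕ → ℝ} {c : ℝ} {n : ℕ} (hc0 : 0 ≤ c) (hc : 4 * c ≤ 1)
    (hE : ∀ ℓ, E ℓ ≤ 1 + c * (E ℓ + E (ℓ + 1))) (hzero : ∀ ℓ, n < ℓ → E ℓ = 0) (ℓ : ℕ) :
    E ℓ ≤ 2 := by
  obtain ⟨m, -, hmax⟩ := (range (n + 2)).exists_max_image E ⟨0, by simp⟩
  have hbound : ∀ ℓ, E ℓ ≤ E m := fun ℓ => by
    rcases lt_or_ge ℓ (n + 2) with hℓ | hℓ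
    · exact hmax ℓ (mem_range.mpr hℓ)
    · rw [hzero ℓ (by omega), ← hzero (n + 1) (by omega)]
      exact hmax _ (by simp)
  have hm0 : 0 ≤ E m := hzero (n + 1) (by omega) ▸ hbound (n + 1)
  have hstep := hE m
  have := hbound (m + 1)
  calc E ℓ ≤ E m := hbound ℓ
    _ ≤ 2 := by nlinarith

lemma exp_neg_two_mul_le_one_sub {x : ℝ} (hx0 : 0 ≤ x) (hx : x ≤ 1 / 2) :
    exp (-(2 * x)) ≤ 1 - x := by
  have hinv : exp (-(2 * x)) * exp (2 * x) = 1 := by rw [← exp_add]; simp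
  nlinarith [add_one_le_exp (2 * x), exp_pos (-(2 * x))]

lemma exp_neg_sq_div_le_prod {N d : ℕ} (hdN : 2 * d ≤ N) :
    exp (-(d ^ 2 / N)) ≤ ∏ j ∈ range d, ((N - j : ℕ) : ℝ) / N := by
  have hsum : ∑ j ∈ range d, (2 * j : ℝ) ≤ d ^ 2 := by
    induction d with
    | zero => simp
    | succ d ih =>
      rw [sum_range_succ]
      push_cast
      nlinarith [ih (by omega)]
  have hfactor : ∀ j ∈ range d, exp (-(2 * (j / N))) ≤ ((N - j : ℕ) : ℝ) / N := by
    intro j hj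
    have hjd := mem_range.mp hj
    have hN : (0 : ℝ) < N := by exact_mod_cast (by omega : 0 < N)
    have hjN : (2 * j : ℝ) ≤ N := by exact_mod_cast (by omega : 2 * j ≤ N)
    rw [Nat.cast_sub (by omega), sub_div, div_self hN.ne']
    exact exp_neg_two_mul_le_one_sub (by positivity) (by rw [div_le_iff₀ hN]; linarith)
  calc exp (-(d ^ 2 / N)) ≤ exp (∑ j ∈ range d, -(2 * (j / N))) := by
        rw [exp_le_exp, sum_neg_distrib, neg_le_neg_iff]
        simp_rw [← mul_div_assoc]
        rw [← sum_div]
        exact div_le_div_of_nonneg_right hsum (Nat.cast_nonneg N)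
    _ = ∏ j ∈ range d, exp (-(2 * (j / N))) := exp_sum _ _
    _ ≤ ∏ j ∈ range d, ((N - j : ℕ) : ℝ) / N :=
        prod_le_prod (fun _ _ => (exp_pos _).le) hfactor

lemma eventually_four_mul_nuN_le {w : ℝ} (hw : w < 1) :
    ∀ᶠ N : ℕ in atTop, 0 < N ∧ 4 * nuN w N ≤ N := by
  have hsmall : ∀ᶠ N : ℕ in atTop, (N : ℝ) ^ (w - 1) ≤ 1 / 4 := by
    have := (tendsto_rpow_neg_atTop (by linarith : 0 < 1 - w)).comp tendsto_natCast_atTop_atTop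
    simpa using this.eventually (ge_mem_nhds (by norm_num : (0 : ℝ) < 1 / 4))
  filter_upwards [hsmall, eventually_gt_atTop 0] with N hN hpos
  refine ⟨hpos, ?_⟩
  have hNr : (0 : ℝ) < N := by exact_mod_cast hpos
  have hpow : (N : ℝ) ^ w = (N : ℝ) ^ (w - 1) * N := by
    rw [← rpow_add_one hNr.ne']; ring_nf
  have hfloor : (nuN w N : ℝ) ≤ (N : ℝ) ^ w := Nat.floor_le (by positivity)
  have : (4 * nuN w N : ℝ) ≤ N := by nlinarith
  exact_mod_cast this

theorem stmt18_general {Ω : Type*} [MeasurableSpace Ω] (μ : Measure Ω)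
    (I : ℕ → ℕ → Ω → ℕ)
    (hImeas : ∀ N k, Measurable (I N k))
    (hIlt : ∀ N k ω, 0 < N → I N k ω < N)
    (hIunif : ∀ N, 0 < N → ∀ k s, s < N → μ {ω | I N k ω = s} = (N : ℝ≥0∞)⁻¹)
    (hIindep : ∀ N, iIndepFun (I N) μ)
    (w : ℝ) (hw : w ∈ Set.Ioo (1 / 2 : ℝ) 1) :
    ∀ᶠ N : ℕ in atTop, ∀ d : ℕ, 1 ≤ d → d ≤ nuN w N →
      Real.exp (-((nuN w N : ℝ) ^ 2 / N)) ≤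
        (∫ ω, (∑ i ∈ Finset.Icc 1 (nuN w N),
            if hdist N (Ywalk I N i ω) onevec = d then (1 : ℝ) else 0) ∂μ) ∧
      (∫ ω, (∑ i ∈ Finset.Icc 1 (nuN w N),
            if hdist N (Ywalk I N i ω) onevec = d then (1 : ℝ) else 0) ∂μ) ≤ 2 := by
  filter_upwards [eventually_four_mul_nuN_le hw.2] with N ⟨hN, hνN⟩ d hd hdν
  have hI : IsIIDUniform μ N (I N) :=
    ⟨hImeas N, fun k ω => hIlt N k ω hN, hIunif N hN, hIindep N⟩
  have hocc : ∫ ω, (∑ i ∈ Icc 1 (nuN w N),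
      if hdist N (Ywalk I N i ω) onevec = d then (1 : ℝ) else 0) ∂μ =
        occupation μ N (I N) (nuN w N) d :=
    hI.integral_sum_ite_eq_occupation _ d
  have hνN' : 4 * (nuN w N : ℝ) ≤ N := by exact_mod_cast hνN
  rw [hocc]
  constructor
  · calc exp (-((nuN w N : ℝ) ^ 2 / N)) ≤ exp (-((d : ℝ) ^ 2 / N)) := by gcongr
      _ ≤ ∏ j ∈ range d, ((N - j : ℕ) : ℝ) / N := exp_neg_sq_div_le_prod (by omega)
      _ = μ.real {ω | Set.InjOn (I N · ω) (range d)} := (hI.measureReal_injOn d).symm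
      _ ≤ occupation μ N (I N) (nuN w N) d := hI.measureReal_injOn_le_occupation hd hdν
  · refine le_two_of_le_one_add_mul (by positivity) ?_ (hI.occupation_le · _)
      (fun ℓ => occupation_eq_zero_of_lt) d
    rw [mul_div_assoc']
    exact div_le_one_of_le₀ hνN' (Nat.cast_nonneg N)

/-- Occupation time of a given distance by the hypercube walk (from the proof of Lemma 4.2):
for all large `N` and all `1 ≤ d ≤ ν`, the expected number of times `i ∈ {1,…,ν}` with
`dist(Y_N(i), Y_N(0)) = d` lies between `e^{-ν²/N}` and `2`. -/
theorem stmt18 {Ω : Type*} [MeasurableSpace Ω] (μ : Measure Ω) [IsProbabilityMeasure μ]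
    (I : ℕ → ℕ → Ω → ℕ)
    (hImeas : ∀ N k, Measurable (I N k))
    (hIlt : ∀ N k ω, 0 < N → I N k ω < N)
    (hIunif : ∀ N, 0 < N → ∀ k s, s < N → μ {ω | I N k ω = s} = (N : ℝ≥0∞)⁻¹)
    (hIindep : ∀ N, iIndepFun (I N) μ)
    (w : ℝ) (hw : w ∈ Set.Ioo (1 / 2 : ℝ) 1) :
    ∀ᶠ N : ℕ in atTop, ∀ d : ℕ, 1 ≤ d → d ≤ nuN w N →
      Real.exp (-((nuN w N : ℝ) ^ 2 / N)) ≤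
        (∫ ω, (∑ i ∈ Finset.Icc 1 (nuN w N),
            if hdist N (Ywalk I N i ω) onevec = d then (1 : ℝ) else 0) ∂μ) ∧
      (∫ ω, (∑ i ∈ Finset.Icc 1 (nuN w N),
            if hdist N (Ywalk I N i ω) onevec = d then (1 : ℝ) else 0) ∂μ) ≤ 2 :=
  stmt18_general μ I hImeas hIlt hIunif hIindep w hw
end
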